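/- arXiv:2202.10674 — 5 statements merged into one kernel-verified Lean document; each statement's English description precedes it below -/
import Mathlib

section
/- Let (A,∘,[·,·]) be a Gel'fand-Dorfman bialgebra over K and Ω(A,V) = (l_V, r_V, f, ∗, ▷, h, {·,·}) an extending datum of A by a vector space V in which l_A, r_A and ◁ are the zero maps. Then Ω(A,V) is a GD extending structure (i.e. the products (a,x)∘(b,y) = (a∘b + l_V(x)b + r_V(y)a + f(x,y), x∗y) and [(a,x),(b,y)] = ([a,b] + x▷b − y▷a + h(x,y), {x,y}) make A×V a GD bialgebra) if and only if: ∘ makes A×V a Novikov algebra, [·,·] makes A×V a Lie algebra, (V,∗,{·,·}) is a GD bialgebra, and for all a,b ∈ A, x,y,z ∈ V: [a, r_V(x)b] − x▷(b∘a) + r_V(x)[b,a] + (x▷b)∘a + b∘(x▷a) = 0; [a, l_V(x)b] − [b, l_V(x)a] + (x▷a)∘b − (x▷b)∘a − l_V(x)[a,b] = 0; [a, f(x,y)] − (x∗y)▷a − y▷(l_V(x)a) + r_V(y)(x▷a) − h(x,y)∘a − l_V({x,y})a + l_V(x)(y▷a) = 0; x▷(r_V(y)a) − y▷(r_V(x)a)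 − r_V(y)(x▷a) + r_V(x)(y▷a) − a∘h(x,y) − r_V({x,y})a = 0; x▷f(y,z) + h(x, y∗z) − z▷f(y,x) − h(z, y∗x) + r_V(z)(h(y,x)) + f({y,x}, z) − r_V(x)(h(y,z)) − f({y,z}, x) − l_V(y)(h(x,z)) − f(y, {x,z}) = 0. Moreover, in this case A×{0} is an ideal of the resulting GD bialgebra A◇V (a Lie ideal for [·,·] and a two-sided ideal for ∘). -/
namespace GDExt

def IsNovikov {M : Type*} [AddCommGroup M] (mul : M → M → M) : Prop :=
  (∀ a b c, mul (mul a b) c - mul a (mul b c) = mul (mul b a) c - mul b (mul a c)) ∧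
  ∀ a b c, mul (mul a b) c = mul (mul a c) b

def IsLieBracket {M : Type*} [AddCommGroup M] (br : M → M → M) : Prop :=
  (∀ a, br a a = 0) ∧ ∀ a b c, br a (br b c) = br (br a b) c + br b (br a c)

def IsGD {M : Type*} [AddCommGroup M] (mul br : M → M → M) : Prop :=
  IsNovikov mul ∧ IsLieBracket br ∧
  ∀ a b c, br a (mul b c) - br c (mul b a) + mul (br b a) c - mul (br b c) a - mul b (br a c) = 0

variable {K : Type*} [Field K]
variable {A V : Type*} [AddCommGroup A] [Module K A] [AddCommGroup V] [Module K V]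

/-- First component bilinear product of the unified product `A ♮ V`. -/
def uniMul (circ : A →ₗ[K] A →ₗ[K] A) (lA rA : A →ₗ[K] Module.End K V)
    (lV rV : V →ₗ[K] Module.End K A) (f : V →ₗ[K] V →ₗ[K] A)
    (st : V →ₗ[K] V →ₗ[K] V) : A × V → A × V → A × V :=
  fun p q =>
    (circ p.1 q.1 + lV p.2 q.1 + rV q.2 p.1 + f p.2 q.2,
     st p.2 q.2 + lA p.1 q.2 + rA q.1 p.2)

/-- Bracket of the unified product `A ♮ V`. -/
def uniBr (brk : A →ₗ[K] A →ₗ[K] A) (tl : V →ₗ[K] A →ₗ[K] V) (tr : V →ₗ[K] A →ₗ[K] A)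
    (hm : V →ₗ[K] V →ₗ[K] A) (vbr : V →ₗ[K] V →ₗ[K] V) : A × V → A × V → A × V :=
  fun p q =>
    (brk p.1 q.1 + tr p.2 q.1 - tr q.2 p.1 + hm p.2 q.2,
     vbr p.2 q.2 + tl p.2 q.1 - tl q.2 p.1)

end GDExt

/-!
The compatibility defect `[p, q ∘ r] - [r, q ∘ p] + [q, p] ∘ r - [q, r] ∘ p - q ∘ [p, r]` of
`A ◇ V` is computed componentwise. Since `l_A`, `r_A` and `◁` vanish, the second coordinate is a
homomorphism onto `V`, so the `V`-component is the defect of `(V, ∗, {·,·})`, and `A × {0}` is an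
ideal. The `A`-component splits as the defect of `A` plus the five listed expressions, evaluated
on the `A`- and `V`-parts of `p, q, r`; evaluating on arguments of the form `(a, 0)` and `(0, x)`
isolates each of them.
-/

namespace GDExt

section Defect

variable {M N : Type*} [AddCommGroup M] [AddCommGroup N]

def gdDefect (mul br : M → M → M) (a b c : M) : M :=
  br a (mul b c) - br c (mul b a) + mul (br b a) c - mul (br b c) a - mul b (br a c)

theorem isGD_iff (mul br : M → M → M) :
    IsGD mul br ↔ IsNovikov mul ∧ IsLieBracket br ∧ ∀ a b c, gdDefect mul br a b c = 0 :=
  Iff.rfl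

variable {mul br : M → M → M} {mul' br' : N → N → N} (π : M →+ N)

theorem IsNovikov.of_surjective (hπ : Function.Surjective π)
    (hmul : ∀ a b, π (mul a b) = mul' (π a) (π b)) (h : IsNovikov mul) : IsNovikov mul' := by
  refine ⟨hπ.forall₃.2 fun a b c => ?_, hπ.forall₃.2 fun a b c => ?_⟩
  · simpa only [map_sub, hmul] using congrArg π (h.1 a b c)
  · simpa only [hmul] using congrArg π (h.2 a b c)

theorem IsLieBracket.of_surjective (hπ : Function.Surjective π)
    (hbr : ∀ a b, π (br a b) = br' (π a) (π b)) (h : IsLieBracket br) : IsLieBracket br' := by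
  refine ⟨hπ.forall.2 fun a => ?_, hπ.forall₃.2 fun a b c => ?_⟩
  · simpa only [hbr, map_zero] using congrArg π (h.1 a)
  · simpa only [map_add, hbr] using congrArg π (h.2 a b c)

theorem map_gdDefect (hmul : ∀ a b, π (mul a b) = mul' (π a) (π b))
    (hbr : ∀ a b, π (br a b) = br' (π a) (π b)) (a b c : M) :
    π (gdDefect mul br a b c) = gdDefect mul' br' (π a) (π b) (π c) := by
  simp only [gdDefect, map_sub, map_add, hmul, hbr]

theorem IsGD.of_surjective (hπ : Function.Surjective π)
    (hmul : ∀ a b, π (mul a b) = mul' (π a) (π b)) (hbr : ∀ a b, π (br a b) = br' (π a) (π b))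
    (h : IsGD mul br) : IsGD mul' br' := by
  obtain ⟨hNov, hLie, hDef⟩ := (isGD_iff mul br).1 h
  refine (isGD_iff mul' br').2
    ⟨hNov.of_surjective π hπ hmul, hLie.of_surjective π hπ hbr, hπ.forall₃.2 fun a b c => ?_⟩
  rw [← map_gdDefect π hmul hbr, hDef, map_zero]

end Defect

section CrossedProduct

variable {K : Type*} [Field K]
variable {A V : Type*} [AddCommGroup A] [Module K A] [AddCommGroup V] [Module K V]
variable (circ brk : A →ₗ[K] A →ₗ[K] A) (lV rV : V →ₗ[K] Module.End K A)
  (f : V →ₗ[K] V →ₗ[K] A) (st : V →ₗ[K] V →ₗ[K] V)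
  (tr : V →ₗ[K] A →ₗ[K] A) (hm : V →ₗ[K] V →ₗ[K] A) (vbr : V →ₗ[K] V →ₗ[K] V)

abbrev crossMul : A × V → A × V → A × V := uniMul circ 0 0 lV rV f st

abbrev crossBr : A × V → A × V → A × V := uniBr brk 0 tr hm vbr

@[simp]
theorem crossMul_snd (p q : A × V) : (crossMul circ lV rV f st p q).2 = st p.2 q.2 := by
  simp [uniMul]

@[simp]
theorem crossBr_snd (p q : A × V) : (crossBr brk tr hm vbr p q).2 = vbr p.2 q.2 := by
  simp [uniBr]

def rVTrDefect (a b : A) (x : V) : A :=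
  brk a (rV x b) - tr x (circ b a) + rV x (brk b a) + circ (tr x b) a + circ b (tr x a)

def lVTrDefect (a b : A) (x : V) : A :=
  brk a (lV x b) - brk b (lV x a) + circ (tr x a) b - circ (tr x b) a - lV x (brk a b)

def fHmDefect (a : A) (x y : V) : A :=
  brk a (f x y) - tr (st x y) a - tr y (lV x a) + rV y (tr x a)
    - circ (hm x y) a - lV (vbr x y) a + lV x (tr y a)

def rVHmDefect (a : A) (x y : V) : A :=
  tr x (rV y a) - tr y (rV x a) - rV y (tr x a) + rV x (tr y a)
    - circ a (hm x y) - rV (vbr x y) a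

def cocycleDefect (x y z : V) : A :=
  tr x (f y z) + hm x (st y z) - tr z (f y x) - hm z (st y x) + rV z (hm y x)
    + f (vbr y x) z - rV x (hm y z) - f (vbr y z) x - lV y (hm x z) - f y (vbr x z)

def IsCrossedCompatible : Prop :=
  (∀ (a b : A) (x : V), rVTrDefect circ brk rV tr a b x = 0) ∧
  (∀ (a b : A) (x : V), lVTrDefect circ brk lV tr a b x = 0) ∧
  (∀ (a : A) (x y : V), fHmDefect circ brk lV rV f st tr hm vbr a x y = 0) ∧
  (∀ (a : A) (x y : V), rVHmDefect circ rV tr hm vbr a x y = 0) ∧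
  ∀ x y z : V, cocycleDefect lV rV f st tr hm vbr x y z = 0

theorem gdDefect_crossed_fst (p q r : A × V) :
    (gdDefect (crossMul circ lV rV f st) (crossBr brk tr hm vbr) p q r).1 =
      gdDefect (fun a b => circ a b) (fun a b => brk a b) p.1 q.1 r.1
      + rVTrDefect circ brk rV tr p.1 q.1 r.2 + lVTrDefect circ brk lV tr p.1 r.1 q.2
      - rVTrDefect circ brk rV tr r.1 q.1 p.2
      + fHmDefect circ brk lV rV f st tr hm vbr p.1 q.2 r.2
      + rVHmDefect circ rV tr hm vbr q.1 p.2 r.2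
      - fHmDefect circ brk lV rV f st tr hm vbr r.1 q.2 p.2
      + cocycleDefect lV rV f st tr hm vbr p.2 q.2 r.2 := by
  simp only [gdDefect, rVTrDefect, lVTrDefect, fHmDefect, rVHmDefect, cocycleDefect, uniMul,
    uniBr, Prod.fst_sub, Prod.fst_add, LinearMap.zero_apply,
    add_zero, sub_zero, map_add, map_sub, LinearMap.add_apply, LinearMap.sub_apply]
  abel

theorem gdDefect_crossed_snd (p q r : A × V) :
    (gdDefect (crossMul circ lV rV f st) (crossBr brk tr hm vbr) p q r).2 =
      gdDefect (fun x y => st x y) (fun x y => vbr x y) p.2 q.2 r.2 :=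
  map_gdDefect (mul := crossMul circ lV rV f st) (br := crossBr brk tr hm vbr)
    (mul' := fun x y => st x y) (br' := fun x y => vbr x y)
    (AddMonoidHom.snd A V) (crossMul_snd circ lV rV f st) (crossBr_snd brk tr hm vbr) p q r

theorem isCrossedCompatible_of_gdDefect_eq_zero
    (h : ∀ p q r, gdDefect (crossMul circ lV rV f st) (crossBr brk tr hm vbr) p q r = 0) :
    IsCrossedCompatible circ brk lV rV f st tr hm vbr := by
  have key := fun p q r => (gdDefect_crossed_fst circ brk lV rV f st tr hm vbr p q r).symm.trans
    (congrArg Prod.fst (h p q r))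
  simp only [IsCrossedCompatible, gdDefect, rVTrDefect, lVTrDefect, fHmDefect, rVHmDefect,
    cocycleDefect] at key ⊢
  exact ⟨fun a b x => by simpa using key (a, 0) (b, 0) (0, x),
    fun a b x => by simpa using key (a, 0) (0, x) (b, 0),
    fun a x y => by simpa using key (a, 0) (0, x) (0, y),
    fun a x y => by simpa using key (0, x) (a, 0) (0, y),
    fun x y z => by simpa using key (0, x) (0, y) (0, z)⟩

theorem isGD_snd_of_isGD_crossed (h : IsGD (crossMul circ lV rV f st) (crossBr brk tr hm vbr)) :
    IsGD (fun x y => st x y) (fun x y => vbr x y) :=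
  IsGD.of_surjective (mul := crossMul circ lV rV f st) (br := crossBr brk tr hm vbr)
    (mul' := fun x y => st x y) (br' := fun x y => vbr x y) (AddMonoidHom.snd A V)
    Prod.snd_surjective (crossMul_snd circ lV rV f st) (crossBr_snd brk tr hm vbr) h

theorem gdDefect_crossed_eq_zero
    (hA : ∀ a b c, gdDefect (fun a b => circ a b) (fun a b => brk a b) a b c = 0)
    (hV : ∀ x y z, gdDefect (fun x y => st x y) (fun x y => vbr x y) x y z = 0)
    (hcomp : IsCrossedCompatible circ brk lV rV f st tr hm vbr) (p q r : A × V) :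
    gdDefect (crossMul circ lV rV f st) (crossBr brk tr hm vbr) p q r = 0 := by
  obtain ⟨h₁, h₂, h₃, h₄, h₅⟩ := hcomp
  ext
  · simp [gdDefect_crossed_fst, hA, h₁, h₂, h₃, h₄, h₅]
  · simp [gdDefect_crossed_snd, hV]

theorem isGD_crossed_iff
    (hA : ∀ a b c, gdDefect (fun a b => circ a b) (fun a b => brk a b) a b c = 0) :
    IsGD (crossMul circ lV rV f st) (crossBr brk tr hm vbr) ↔
      IsNovikov (crossMul circ lV rV f st) ∧ IsLieBracket (crossBr brk tr hm vbr) ∧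
        IsGD (fun x y => st x y) (fun x y => vbr x y) ∧
        IsCrossedCompatible circ brk lV rV f st tr hm vbr := by
  constructor
  · intro h
    exact ⟨h.1, h.2.1,
      isGD_snd_of_isGD_crossed circ brk lV rV f st tr hm vbr h,
      isCrossedCompatible_of_gdDefect_eq_zero circ brk lV rV f st tr hm vbr h.2.2⟩
  · rintro ⟨hNov, hLie, hV, hcomp⟩
    exact ⟨hNov, hLie, gdDefect_crossed_eq_zero circ brk lV rV f st tr hm vbr hA hV.2.2 hcomp⟩

end CrossedProduct

/-- crossed product `A ◇ V` (extending datum with trivial `l_A`, `r_A`, `◁`):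
characterization of when it is a GD bialgebra, and in that case `A × {0}` is an ideal. -/
theorem crossed_product_isGD_iff
    {K A V : Type*} [Field K] [AddCommGroup A] [Module K A] [AddCommGroup V] [Module K V]
    (circ brk : A →ₗ[K] A →ₗ[K] A)
    (hGD : IsGD (fun a b => circ a b) (fun a b => brk a b))
    (lV rV : V →ₗ[K] Module.End K A)
    (f : V →ₗ[K] V →ₗ[K] A) (st : V →ₗ[K] V →ₗ[K] V)
    (tr : V →ₗ[K] A →ₗ[K] A)
    (hm : V →ₗ[K] V →ₗ[K] A) (vbr : V →ₗ[K] V →ₗ[K] V) :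
    (IsGD (uniMul circ (0 : A →ₗ[K] Module.End K V) (0 : A →ₗ[K] Module.End K V) lV rV f st)
        (uniBr brk (0 : V →ₗ[K] A →ₗ[K] V) tr hm vbr) ↔
      (IsNovikov (uniMul circ (0 : A →ₗ[K] Module.End K V) (0 : A →ₗ[K] Module.End K V) lV rV f st) ∧
       IsLieBracket (uniBr brk (0 : V →ₗ[K] A →ₗ[K] V) tr hm vbr) ∧
       IsGD (fun x y => st x y) (fun x y => vbr x y) ∧
       (∀ (a b : A) (x : V),
          brk a (rV x b) - tr x (circ b a) + rV x (brk b a)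
            + circ (tr x b) a + circ b (tr x a) = 0) ∧
       (∀ (a b : A) (x : V),
          brk a (lV x b) - brk b (lV x a) + circ (tr x a) b - circ (tr x b) a
            - lV x (brk a b) = 0) ∧
       (∀ (a : A) (x y : V),
          brk a (f x y) - tr (st x y) a - tr y (lV x a) + rV y (tr x a)
            - circ (hm x y) a - lV (vbr x y) a + lV x (tr y a) = 0) ∧
       (∀ (a : A) (x y : V),
          tr x (rV y a) - tr y (rV x a) - rV y (tr x a) + rV x (tr y a)
            - circ a (hm x y) - rV (vbr x y) a = 0) ∧
       (∀ x y z : V,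
          tr x (f y z) + hm x (st y z) - tr z (f y x) - hm z (st y x) + rV z (hm y x)
            + f (vbr y x) z - rV x (hm y z) - f (vbr y z) x - lV y (hm x z) - f y (vbr x z) = 0))) ∧
    (IsGD (uniMul circ (0 : A →ₗ[K] Module.End K V) (0 : A →ₗ[K] Module.End K V) lV rV f st)
        (uniBr brk (0 : V →ₗ[K] A →ₗ[K] V) tr hm vbr) →
      ∀ (a : A) (q : A × V),
        (uniMul circ (0 : A →ₗ[K] Module.End K V) (0 : A →ₗ[K] Module.End K V) lV rV f st (a, 0) q).2 = 0 ∧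
        (uniMul circ (0 : A →ₗ[K] Module.End K V) (0 : A →ₗ[K] Module.End K V) lV rV f st q (a, 0)).2 = 0 ∧
        (uniBr brk (0 : V →ₗ[K] A →ₗ[K] V) tr hm vbr (a, 0) q).2 = 0 ∧
        (uniBr brk (0 : V →ₗ[K] A →ₗ[K] V) tr hm vbr q (a, 0)).2 = 0) :=
  ⟨isGD_crossed_iff circ brk lV rV f st tr hm vbr hGD.2.2, fun _ a q => by
    simp only [crossMul_snd, crossBr_snd, map_zero, LinearMap.zero_apply, and_self]⟩

end GDExt
end

section
/- Let (A,∘,[·,·]) be a Gel'fand-Dorfman bialgebra over K and Ω(A,V) = (l_A, r_A, l_V, r_V, ∗, ◁, ▷, {·,·}) an extending datum of A by a vector space V in which f and h are the zero maps. Then Ω(A,V) is a GD extending structure (i.e. the products (a,x)∘(b,y) = (a∘b + l_V(x)b + r_V(y)a, x∗y + l_A(a)y + r_A(b)x) and [(a,x),(b,y)] = ([a,b] + x▷b − y▷a, {x,y} + x◁b − y◁a) make A×V a GD bialgebra, the bicrossed product A⋈V) if and only if: ∘ makes A×V a Novikov algebra, [·,·] makes A×V a Lie algebra, (V,∗,{·,·})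 is a GD bialgebra, (V,◁,l_A,r_A) is a right module of the GD bialgebra (A,∘,[·,·]), (A,▷,l_V,r_V) is a left module of the GD bialgebra (V,∗,{·,·}), and for all a,b ∈ A, x,y ∈ V: [a, r_V(x)b] − (l_A(b)x)▷a − x▷(b∘a) + r_V(x)[b,a] + (x▷b)∘a + l_V(x◁b)a + b∘(x▷a) + r_V(x◁a)b = 0; [a, l_V(x)b] − (r_A(b)x)▷a − [b, l_V(x)a] + (r_A(a)x)▷b + (x▷a)∘b + l_V(x◁a)b − (x▷b)∘a − l_V(x◁b)a − l_V(x)[a,b] = 0; (x∗y)◁a + {y, r_A(a)x} + y◁(l_V(x)a) − (x◁a)∗y − l_A(x▷a)y + r_A(a){x,y} − x∗(y◁a) − r_A(y▷a)x = 0; {x, l_A(a)y} + x◁(r_V(y)a) − {y, l_A(a)x} − y◁(r_V(x)a) − (x◁a)∗y − l_A(x▷a)y + (y◁a)∗x + l_A(y▷a)x − l_A(a){x,y} = 0. Moreover, in this case A×{0} and {0}×V are both subalgebras of A⋈V. -/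
namespace GDExt

variable {K : Type*} [Field K]
variable {A V : Type*} [AddCommGroup A] [Module K A] [AddCommGroup V] [Module K V]

/-- `(V, ◁, l_A, r_A)` is a right module of the GD bialgebra `(A, ∘, [·,·])`. -/
def IsGDRightModule (circ brk : A →ₗ[K] A →ₗ[K] A)
    (tl : V →ₗ[K] A →ₗ[K] V) (lA rA : A →ₗ[K] Module.End K V) : Prop :=
  -- right Lie module
  (∀ (v : V) (a b : A), tl v (brk a b) = tl (tl v a) b - tl (tl v b) a) ∧
  -- Novikov bimodule
  (∀ (a b : A) (v : V), lA a (lA b v) - lA (circ a b) v = lA b (lA a v) - lA (circ b a) v) ∧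
  (∀ (a b : A) (v : V), lA a (rA b v) - rA b (lA a v) = rA (circ a b) v - rA b (rA a v)) ∧
  (∀ (a b : A) (v : V), lA (circ a b) v = rA b (lA a v)) ∧
  (∀ (a b : A) (v : V), rA a (rA b v) = rA b (rA a v)) ∧
  -- compatibility conditions
  (∀ (a b : A) (v : V),
    tl (lA b v) a + tl v (circ b a) - lA (brk b a) v - rA a (tl v b) - lA b (tl v a) = 0) ∧
  (∀ (a b : A) (v : V),
    tl (rA b v) a - tl (rA a v) b - rA b (tl v a) + rA a (tl v b) + rA (brk a b) v = 0)

/-- `(A, ▷, l_V, r_V)` is a left module of the GD bialgebra `(V, ∗, {·,·})`. -/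
def IsGDLeftModule (st vbr : V →ₗ[K] V →ₗ[K] V)
    (tr : V →ₗ[K] A →ₗ[K] A) (lV rV : V →ₗ[K] Module.End K A) : Prop :=
  -- left Lie module
  (∀ (x y : V) (w : A), tr (vbr x y) w = tr x (tr y w) - tr y (tr x w)) ∧
  -- Novikov bimodule
  (∀ (x y : V) (w : A), lV x (lV y w) - lV (st x y) w = lV y (lV x w) - lV (st y x) w) ∧
  (∀ (x y : V) (w : A), lV x (rV y w) - rV y (lV x w) = rV (st x y) w - rV y (rV x w)) ∧
  (∀ (x y : V) (w : A), lV (st x y) w = rV y (lV x w)) ∧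
  (∀ (x y : V) (w : A), rV x (rV y w) = rV y (rV x w)) ∧
  -- compatibility conditions
  (∀ (x y : V) (w : A),
    tr x (lV y w) + tr (st y x) w + lV (vbr y x) w - rV x (tr y w) - lV y (tr x w) = 0) ∧
  (∀ (x y : V) (w : A),
    tr x (rV y w) - tr y (rV x w) - rV y (tr x w) + rV x (tr y w) - rV (vbr x y) w = 0)

set_option maxHeartbeats 4000000 in
/-- characterization of the bicrossed product `A ⋈ V` (extending datum with
trivial `f` and `h`), and in that case `A × {0}` and `{0} × V` are subalgebras. -/
theorem bicrossed_product_isGD_iff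
    (circ brk : A →ₗ[K] A →ₗ[K] A)
    (hGD : IsGD (fun a b => circ a b) (fun a b => brk a b))
    (lA rA : A →ₗ[K] Module.End K V) (lV rV : V →ₗ[K] Module.End K A)
    (st : V →ₗ[K] V →ₗ[K] V)
    (tl : V →ₗ[K] A →ₗ[K] V) (tr : V →ₗ[K] A →ₗ[K] A)
    (vbr : V →ₗ[K] V →ₗ[K] V) :
    (IsGD (uniMul circ lA rA lV rV (0 : V →ₗ[K] V →ₗ[K] A) st)
        (uniBr brk tl tr (0 : V →ₗ[K] V →ₗ[K] A) vbr) ↔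
      (IsNovikov (uniMul circ lA rA lV rV (0 : V →ₗ[K] V →ₗ[K] A) st) ∧
       IsLieBracket (uniBr brk tl tr (0 : V →ₗ[K] V →ₗ[K] A) vbr) ∧
       IsGD (fun x y => st x y) (fun x y => vbr x y) ∧
       IsGDRightModule circ brk tl lA rA ∧
       IsGDLeftModule st vbr tr lV rV ∧
       -- (G1)
       (∀ (a b : A) (x : V),
          brk a (rV x b) - tr (lA b x) a - tr x (circ b a) + rV x (brk b a)
            + circ (tr x b) a + lV (tl x b) a + circ b (tr x a) + rV (tl x a) b = 0) ∧
       -- (G3)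
       (∀ (a b : A) (x : V),
          brk a (lV x b) - tr (rA b x) a - brk b (lV x a) + tr (rA a x) b
            + circ (tr x a) b + lV (tl x a) b - circ (tr x b) a - lV (tl x b) a
            - lV x (brk a b) = 0) ∧
       -- (G6)
       (∀ (a : A) (x y : V),
          tl (st x y) a + vbr y (rA a x) + tl y (lV x a) - st (tl x a) y - lA (tr x a) y
            + rA a (vbr x y) - st x (tl y a) - rA (tr y a) x = 0) ∧
       -- (G8)
       (∀ (a : A) (x y : V),
          vbr x (lA a y) + tl x (rV y a) - vbr y (lA a x) - tl y (rV x a) - st (tl x a) y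
            - lA (tr x a) y + st (tl y a) x + lA (tr y a) x - lA a (vbr x y) = 0))) ∧
    (IsGD (uniMul circ lA rA lV rV (0 : V →ₗ[K] V →ₗ[K] A) st)
        (uniBr brk tl tr (0 : V →ₗ[K] V →ₗ[K] A) vbr) →
      (∀ a b : A,
        uniMul circ lA rA lV rV (0 : V →ₗ[K] V →ₗ[K] A) st (a, 0) (b, 0) = (circ a b, 0) ∧
        uniBr brk tl tr (0 : V →ₗ[K] V →ₗ[K] A) vbr (a, 0) (b, 0) = (brk a b, 0)) ∧
      (∀ x y : V,
        uniMul circ lA rA lV rV (0 : V →ₗ[K] V →ₗ[K] A) st (0, x) (0, y) = (0, st x y) ∧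
        uniBr brk tl tr (0 : V →ₗ[K] V →ₗ[K] A) vbr (0, x) (0, y) = (0, vbr x y))) := by
  constructor
  · constructor
    · rintro ⟨hN, hL, hC⟩
      obtain ⟨hN1, hN2⟩ := hN
      obtain ⟨hL1, hL2⟩ := hL
      refine ⟨⟨hN1, hN2⟩, ⟨hL1, hL2⟩, ⟨⟨?_, ?_⟩, ⟨?_, ?_⟩, ?_⟩,
        ⟨?_, ?_, ?_, ?_, ?_, ?_, ?_⟩, ⟨?_, ?_, ?_, ?_, ?_, ?_, ?_⟩, ?_, ?_, ?_, ?_⟩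
      -- Novikov of st (1)
      · intro x y z
        have h := hN1 ((0 : A), x) (0, y) (0, z)
        simp only [uniMul, map_zero, LinearMap.zero_apply, add_zero, zero_add,
          Prod.mk_sub_mk, Prod.mk.injEq] at h
        beta_reduce
        linear_combination (norm := abel1) h.2
      -- Novikov of st (2)
      · intro x y z
        have h := hN2 ((0 : A), x) (0, y) (0, z)
        simp only [uniMul, map_zero, LinearMap.zero_apply, add_zero, zero_add,
          Prod.mk.injEq] at h
        beta_reduce
        linear_combination (norm := abel1) h.2
      -- vbr alternating
      · intro x
        have h := hL1 ((0 : A), x)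
        simp only [uniBr, map_zero, LinearMap.zero_apply, add_zero, zero_add, sub_zero,
          sub_self, Prod.mk_eq_zero] at h
        beta_reduce
        linear_combination (norm := abel1) h.2
      -- vbr Jacobi
      · intro x y z
        have h := hL2 ((0 : A), x) (0, y) (0, z)
        simp only [uniBr, map_zero, LinearMap.zero_apply, add_zero, zero_add, sub_zero,
          zero_sub, Prod.mk_add_mk, Prod.mk.injEq] at h
        beta_reduce
        linear_combination (norm := abel1) h.2
      -- GD compat of V
      · intro x y z
        have h := hC ((0 : A), x) (0, y) (0, z)
        simp only [uniMul, uniBr, map_zero, LinearMap.zero_apply, add_zero, zero_add,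
          sub_zero, zero_sub, Prod.mk_sub_mk, Prod.mk_add_mk, Prod.mk_eq_zero] at h
        beta_reduce
        linear_combination (norm := abel1) h.2
      -- right Lie module
      · intro v a b
        have h := hL2 ((0 : A), v) (a, 0) (b, 0)
        simp only [uniBr, map_zero, LinearMap.zero_apply, add_zero, zero_add, sub_zero,
          zero_sub, Prod.mk_add_mk, Prod.mk.injEq] at h
        linear_combination (norm := abel1) h.2
      -- Novikov bimodule (lA lA)
      · intro a b v
        have h := hN1 (a, (0 : V)) (b, 0) (0, v)
        simp only [uniMul, map_zero, LinearMap.zero_apply, add_zero, zero_add,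
          Prod.mk_sub_mk, Prod.mk.injEq] at h
        linear_combination (norm := abel1) -h.2
      -- Novikov bimodule (lA rA)
      · intro a b v
        have h := hN1 (a, (0 : V)) (0, v) (b, 0)
        simp only [uniMul, map_zero, LinearMap.zero_apply, add_zero, zero_add,
          Prod.mk_sub_mk, Prod.mk.injEq] at h
        linear_combination (norm := abel1) -h.2
      -- Novikov bimodule (lA circ)
      · intro a b v
        have h := hN2 (a, (0 : V)) (b, 0) (0, v)
        simp only [uniMul, map_zero, LinearMap.zero_apply, add_zero, zero_add,
          Prod.mk.injEq] at h
        linear_combination (norm := abel1) h.2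
      -- Novikov bimodule (rA rA)
      · intro a b v
        have h := hN2 ((0 : A), v) (b, 0) (a, 0)
        simp only [uniMul, map_zero, LinearMap.zero_apply, add_zero, zero_add,
          Prod.mk.injEq] at h
        linear_combination (norm := abel1) h.2
      -- right module compat 1
      · intro a b v
        have h := hC ((0 : A), v) (b, 0) (a, 0)
        simp only [uniMul, uniBr, map_zero, map_neg, map_sub, LinearMap.zero_apply,
          LinearMap.neg_apply, LinearMap.sub_apply, add_zero, zero_add, sub_zero, zero_sub,
          Prod.mk_sub_mk, Prod.mk_add_mk, Prod.mk_eq_zero] at h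
        linear_combination (norm := abel1) h.2
      -- right module compat 2
      · intro a b v
        have h := hC (a, (0 : V)) (0, v) (b, 0)
        simp only [uniMul, uniBr, map_zero, map_neg, map_sub, LinearMap.zero_apply,
          LinearMap.neg_apply, LinearMap.sub_apply, add_zero, zero_add, sub_zero, zero_sub,
          Prod.mk_sub_mk, Prod.mk_add_mk, Prod.mk_eq_zero] at h
        linear_combination (norm := abel1) -h.2
      -- left Lie module
      · intro x y w
        have h := hL2 ((0 : A), x) (0, y) (w, 0)
        simp only [uniBr, map_zero, LinearMap.zero_apply, add_zero, zero_add, sub_zero,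
          zero_sub, Prod.mk_add_mk, Prod.mk.injEq] at h
        linear_combination (norm := abel1) -h.1
      -- Novikov bimodule (lV lV)
      · intro x y w
        have h := hN1 ((0 : A), x) (0, y) (w, 0)
        simp only [uniMul, map_zero, LinearMap.zero_apply, add_zero, zero_add,
          Prod.mk_sub_mk, Prod.mk.injEq] at h
        linear_combination (norm := abel1) -h.1
      -- Novikov bimodule (lV rV)
      · intro x y w
        have h := hN1 ((0 : A), x) (w, 0) (0, y)
        simp only [uniMul, map_zero, LinearMap.zero_apply, add_zero, zero_add,
          Prod.mk_sub_mk, Prod.mk.injEq] at h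
        linear_combination (norm := abel1) -h.1
      -- Novikov bimodule (lV st)
      · intro x y w
        have h := hN2 ((0 : A), x) (0, y) (w, 0)
        simp only [uniMul, map_zero, LinearMap.zero_apply, add_zero, zero_add,
          Prod.mk.injEq] at h
        linear_combination (norm := abel1) h.1
      -- Novikov bimodule (rV rV)
      · intro x y w
        have h := hN2 (w, (0 : V)) (0, y) (0, x)
        simp only [uniMul, map_zero, LinearMap.zero_apply, add_zero, zero_add,
          Prod.mk.injEq] at h
        linear_combination (norm := abel1) h.1
      -- left module compat 1
      · intro x y w
        have h := hC ((0 : A), x) (0, y) (w, 0)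
        simp only [uniMul, uniBr, map_zero, map_neg, map_sub, LinearMap.zero_apply,
          LinearMap.neg_apply, LinearMap.sub_apply, add_zero, zero_add, sub_zero, zero_sub,
          Prod.mk_sub_mk, Prod.mk_add_mk, Prod.mk_eq_zero] at h
        linear_combination (norm := abel1) h.1
      -- left module compat 2
      · intro x y w
        have h := hC ((0 : A), x) (w, 0) (0, y)
        simp only [uniMul, uniBr, map_zero, map_neg, map_sub, LinearMap.zero_apply,
          LinearMap.neg_apply, LinearMap.sub_apply, add_zero, zero_add, sub_zero, zero_sub,
          Prod.mk_sub_mk, Prod.mk_add_mk, Prod.mk_eq_zero] at h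
        linear_combination (norm := abel1) h.1
      -- G1
      · intro a b x
        have h := hC (a, (0 : V)) (b, 0) (0, x)
        simp only [uniMul, uniBr, map_zero, map_neg, map_sub, LinearMap.zero_apply,
          LinearMap.neg_apply, LinearMap.sub_apply, add_zero, zero_add, sub_zero, zero_sub,
          Prod.mk_sub_mk, Prod.mk_add_mk, Prod.mk_eq_zero] at h
        linear_combination (norm := abel1) h.1
      -- G3
      · intro a b x
        have h := hC (a, (0 : V)) (0, x) (b, 0)
        simp only [uniMul, uniBr, map_zero, map_neg, map_sub, LinearMap.zero_apply,
          LinearMap.neg_apply, LinearMap.sub_apply, add_zero, zero_add, sub_zero, zero_sub,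
          Prod.mk_sub_mk, Prod.mk_add_mk, Prod.mk_eq_zero] at h
        linear_combination (norm := abel1) h.1
      -- G6
      · intro a x y
        have h := hC (a, (0 : V)) (0, x) (0, y)
        simp only [uniMul, uniBr, map_zero, map_neg, map_sub, LinearMap.zero_apply,
          LinearMap.neg_apply, LinearMap.sub_apply, add_zero, zero_add, sub_zero, zero_sub,
          Prod.mk_sub_mk, Prod.mk_add_mk, Prod.mk_eq_zero] at h
        linear_combination (norm := abel1) -h.2
      -- G8
      · intro a x y
        have h := hC ((0 : A), x) (a, 0) (0, y)
        simp only [uniMul, uniBr, map_zero, map_neg, map_sub, LinearMap.zero_apply,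
          LinearMap.neg_apply, LinearMap.sub_apply, add_zero, zero_add, sub_zero, zero_sub,
          Prod.mk_sub_mk, Prod.mk_add_mk, Prod.mk_eq_zero] at h
        linear_combination (norm := abel1) h.2
    · rintro ⟨hN, hL, hV, hRM, hLM, hG1, hG3, hG6, hG8⟩
      refine ⟨hN, hL, ?_⟩
      have hAC : ∀ a b c : A,
          brk a (circ b c) - brk c (circ b a) + circ (brk b a) c - circ (brk b c) a
            - circ b (brk a c) = 0 := hGD.2.2
      have hVC : ∀ x y z : V,
          vbr x (st y z) - vbr z (st y x) + st (vbr y x) z - st (vbr y z) x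
            - st y (vbr x z) = 0 := hV.2.2
      obtain ⟨hRL, hR2, hR3, hR4, hR5, hrc1, hrc2⟩ := hRM
      obtain ⟨hLL, hL2', hL3', hL4', hL5', hlc1, hlc2⟩ := hLM
      rintro ⟨a, x⟩ ⟨b, y⟩ ⟨c, z⟩
      simp only [uniMul, uniBr, map_add, map_sub, map_zero, LinearMap.add_apply,
        LinearMap.sub_apply, LinearMap.zero_apply, add_zero, zero_add,
        Prod.mk_add_mk, Prod.mk_sub_mk, Prod.mk_eq_zero]
      constructor
      · linear_combination (norm := abel1) hAC a b c + hG1 a b z + hG3 a c y - hG1 c b x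
          - hlc1 z y a + hlc2 x z b + hlc1 x y c
      · linear_combination (norm := abel1) hVC x y z - hrc1 a b z - hrc2 a c y + hrc1 c b x
          - hG6 a y z + hG8 b x z + hG6 c y x
  · intro _
    constructor
    · intro a b
      constructor <;> simp [uniMul, uniBr]
    · intro x y
      constructor <;> simp [uniMul, uniBr]

end GDExt
end

section
/- Let (A,∘,[·,·]) be a Gel'fand-Dorfman bialgebra over K, E a vector space containing A as a subspace, and suppose E carries a GD bialgebraic structure (E,∘,[·,·]) such that (A,∘,[·,·]) is a subalgebra of E. Then there exist a subspace V of E with E = A ⊕ V and a GD extending structure Ω(A,V) = (l_A, r_A, l_V, r_V, f, ∗, ◁, ▷, h, {·,·}) of A by V such that the map φ : A×V → E, φ(a,x) = a + x, is an isomorphism of GD bialgebras from the unified product A♮V onto (E,∘,[·,·]) whose restriction to A is the identity map. -/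
namespace GDExt

/-- Theorem 3.4: every GD bialgebra structure on `E` containing `A` as a
subalgebra is isomorphic, via `φ(a,x) = a + x` (identity on `A`), to a unified product
`A ♮ V` for some complement `V` of `A` in `E` and some GD extending structure. -/
theorem extending_structure_exists
    {K E : Type*} [Field K] [AddCommGroup E] [Module K E]
    (mulE brE : E →ₗ[K] E →ₗ[K] E)
    (hE : IsGD (fun u v => mulE u v) (fun u v => brE u v))
    (A : Submodule K E)
    (hsub : ∀ a b : E, a ∈ A → b ∈ A → mulE a b ∈ A ∧ brE a b ∈ A) :
    ∃ V : Submodule K E, IsCompl A V ∧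
      ∃ (circ brk : ↥A →ₗ[K] ↥A →ₗ[K] ↥A),
        (∀ a b : ↥A, ((circ a b : E) = mulE a b) ∧ ((brk a b : E) = brE a b)) ∧
        ∃ (lA rA : ↥A →ₗ[K] Module.End K ↥V) (lV rV : ↥V →ₗ[K] Module.End K ↥A)
          (f : ↥V →ₗ[K] ↥V →ₗ[K] ↥A) (st : ↥V →ₗ[K] ↥V →ₗ[K] ↥V)
          (tl : ↥V →ₗ[K] ↥A →ₗ[K] ↥V) (tr : ↥V →ₗ[K] ↥A →ₗ[K] ↥A)
          (hm : ↥V →ₗ[K] ↥V →ₗ[K] ↥A) (vbr : ↥V →ₗ[K] ↥V →ₗ[K] ↥V),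
          -- Ω(A,V) is a GD extending structure: the unified product is a GD bialgebra
          IsGD (uniMul circ lA rA lV rV f st) (uniBr brk tl tr hm vbr) ∧
          -- φ(a,x) = a + x is bijective
          Function.Bijective (fun p : ↥A × ↥V => (p.1 : E) + (p.2 : E)) ∧
          -- φ is a homomorphism of Novikov algebras
          (∀ p q : ↥A × ↥V,
            ((uniMul circ lA rA lV rV f st p q).1 : E) + ((uniMul circ lA rA lV rV f st p q).2 : E)
              = mulE ((p.1 : E) + (p.2 : E)) ((q.1 : E) + (q.2 : E))) ∧
          -- φ is a homomorphism of Lie algebras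
          (∀ p q : ↥A × ↥V,
            ((uniBr brk tl tr hm vbr p q).1 : E) + ((uniBr brk tl tr hm vbr p q).2 : E)
              = brE ((p.1 : E) + (p.2 : E)) ((q.1 : E) + (q.2 : E))) ∧
          -- the restriction of φ to A is the identity map
          (∀ a : ↥A, ((a : E) + ((0 : ↥V) : E)) = (a : E)) := by
  obtain ⟨V, hV⟩ := Submodule.exists_isCompl A
  refine ⟨V, hV, ?_⟩
  set prA : E →ₗ[K] ↥A := A.linearProjOfIsCompl V hV with hprAdef
  set prV : E →ₗ[K] ↥V := V.linearProjOfIsCompl A hV.symm with hprVdef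
  have hdec : ∀ e : E, ((prA e : E) + (prV e : E)) = e := fun e =>
    Submodule.projection_add_projection_eq_self hV e
  have hA : ∀ (e : E), e ∈ A → (prA e : E) = e := by
    intro e he
    have := Submodule.linearProjOfIsCompl_apply_left hV ⟨e, he⟩
    rw [hprAdef]
    exact congrArg Subtype.val this
  have hVz : ∀ (e : E), e ∈ A → ((prV e : E)) = 0 := by
    intro e he
    have h := hdec e
    rw [hA e he] at h
    exact (add_eq_left).mp h
  set circ : ↥A →ₗ[K] ↥A →ₗ[K] ↥A := ((mulE ∘ₗ A.subtype).compl₂ A.subtype).compr₂ prA with hc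
  set brk : ↥A →ₗ[K] ↥A →ₗ[K] ↥A := ((brE ∘ₗ A.subtype).compl₂ A.subtype).compr₂ prA with hb
  set lA : ↥A →ₗ[K] Module.End K ↥V := ((mulE ∘ₗ A.subtype).compl₂ V.subtype).compr₂ prV with hlA
  set rA : ↥A →ₗ[K] Module.End K ↥V :=
    (((mulE ∘ₗ V.subtype).compl₂ A.subtype).compr₂ prV).flip with hrA
  set lV : ↥V →ₗ[K] Module.End K ↥A := ((mulE ∘ₗ V.subtype).compl₂ A.subtype).compr₂ prA with hlV
  set rV : ↥V →ₗ[K] Module.End K ↥A :=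
    (((mulE ∘ₗ A.subtype).compl₂ V.subtype).compr₂ prA).flip with hrV
  set f : ↥V →ₗ[K] ↥V →ₗ[K] ↥A := ((mulE ∘ₗ V.subtype).compl₂ V.subtype).compr₂ prA with hf
  set st : ↥V →ₗ[K] ↥V →ₗ[K] ↥V := ((mulE ∘ₗ V.subtype).compl₂ V.subtype).compr₂ prV with hst
  set tl : ↥V →ₗ[K] ↥A →ₗ[K] ↥V := ((brE ∘ₗ V.subtype).compl₂ A.subtype).compr₂ prV with htl
  set tr : ↥V →ₗ[K] ↥A →ₗ[K] ↥A := ((brE ∘ₗ V.subtype).compl₂ A.subtype).compr₂ prA with htr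
  set hm : ↥V →ₗ[K] ↥V →ₗ[K] ↥A := ((brE ∘ₗ V.subtype).compl₂ V.subtype).compr₂ prA with hhm
  set vbr : ↥V →ₗ[K] ↥V →ₗ[K] ↥V := ((brE ∘ₗ V.subtype).compl₂ V.subtype).compr₂ prV with hvbr
  have hanti : ∀ u v : E, brE u v = - brE v u := by
    intro u v
    have h : brE (u + v) (u + v) = 0 := hE.2.1.1 (u + v)
    have hu : brE u u = 0 := hE.2.1.1 u
    have hv : brE v v = 0 := hE.2.1.1 v
    simp only [map_add, LinearMap.add_apply] at h
    rw [hu, hv] at h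
    have h0 : brE u v + brE v u = 0 := by linear_combination (norm := abel) h
    linear_combination (norm := abel) h0
  -- φ is a Novikov homomorphism
  have hmulhom : ∀ p q : ↥A × ↥V,
      ((uniMul circ lA rA lV rV f st p q).1 : E) + ((uniMul circ lA rA lV rV f st p q).2 : E)
        = mulE ((p.1 : E) + (p.2 : E)) ((q.1 : E) + (q.2 : E)) := by
    intro p q
    have h1 := hdec (mulE (p.1 : E) (q.1 : E))
    have h2 := hdec (mulE (p.2 : E) (q.1 : E))
    have h3 := hdec (mulE (p.1 : E) (q.2 : E))
    have h4 := hdec (mulE (p.2 : E) (q.2 : E))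
    simp only [uniMul, hc, hlA, hrA, hlV, hrV, hf, hst, LinearMap.compr₂_apply,
      LinearMap.compl₂_apply, LinearMap.comp_apply, Submodule.subtype_apply,
      LinearMap.flip_apply, Submodule.coe_add, map_add, LinearMap.add_apply]
    have hz1 := hVz (mulE (p.1 : E) (q.1 : E)) (hsub _ _ p.1.2 q.1.2).1
    linear_combination (norm := abel) h1 + h2 + h3 + h4 - hz1
  -- φ is a Lie homomorphism
  have hbrhom : ∀ p q : ↥A × ↥V,
      ((uniBr brk tl tr hm vbr p q).1 : E) + ((uniBr brk tl tr hm vbr p q).2 : E)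
        = brE ((p.1 : E) + (p.2 : E)) ((q.1 : E) + (q.2 : E)) := by
    intro p q
    have h1 := hdec (brE (p.1 : E) (q.1 : E))
    have h2 := hdec (brE (p.2 : E) (q.1 : E))
    have h3 := hdec (brE (q.2 : E) (p.1 : E))
    have h4 := hdec (brE (p.2 : E) (q.2 : E))
    simp only [uniBr, hb, htl, htr, hhm, hvbr, LinearMap.compr₂_apply,
      LinearMap.compl₂_apply, LinearMap.comp_apply, Submodule.subtype_apply,
      Submodule.coe_add, Submodule.coe_sub, map_add, LinearMap.add_apply]
    rw [hanti (p.1 : E) (q.2 : E)]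
    have hz1 := hVz (brE (p.1 : E) (q.1 : E)) (hsub _ _ p.1.2 q.1.2).2
    linear_combination (norm := abel) h1 + h2 - h3 + h4 - hz1
  -- the linear equivalence φ
  set φ := Submodule.prodEquivOfIsCompl A V hV with hφdef
  have hφ : ∀ p : ↥A × ↥V, φ p = (p.1 : E) + (p.2 : E) := fun p => rfl
  have hm' : ∀ p q : ↥A × ↥V, φ (uniMul circ lA rA lV rV f st p q) = mulE (φ p) (φ q) := by
    intro p q; rw [hφ, hφ, hφ]; exact hmulhom p q
  have hb' : ∀ p q : ↥A × ↥V, φ (uniBr brk tl tr hm vbr p q) = brE (φ p) (φ q) := by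
    intro p q; rw [hφ, hφ, hφ]; exact hbrhom p q
  refine ⟨circ, brk, ?_, lA, rA, lV, rV, f, st, tl, tr, hm, vbr, ?_, ?_, hmulhom, hbrhom, ?_⟩
  · intro a b
    constructor
    · simpa [hc] using hA (mulE a b) (hsub a b a.2 b.2).1
    · simpa [hb] using hA (brE a b) (hsub a b a.2 b.2).2
  · -- IsGD of the unified product, transported along φ
    refine ⟨⟨?_, ?_⟩, ⟨?_, ?_⟩, ?_⟩
    · intro a b c
      apply φ.injective
      simp only [map_sub, hm']
      exact hE.1.1 (φ a) (φ b) (φ c)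
    · intro a b c
      apply φ.injective
      simp only [hm']
      exact hE.1.2 (φ a) (φ b) (φ c)
    · intro a
      apply φ.injective
      simp only [map_zero, hb']
      exact hE.2.1.1 (φ a)
    · intro a b c
      apply φ.injective
      simp only [map_add, hb']
      exact hE.2.1.2 (φ a) (φ b) (φ c)
    · intro a b c
      apply φ.injective
      simp only [map_sub, map_add, map_zero, hm', hb']
      exact hE.2.2 (φ a) (φ b) (φ c)
  · -- bijectivity
    have heq : (fun p : ↥A × ↥V => (p.1 : E) + (p.2 : E)) = (φ : ↥A × ↥V → E) := by
      funext p; exact (hφ p).symm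
    rw [heq]
    exact φ.bijective
  · intro a; simp

end GDExt
end

section
/- Let (A,∘,[·,·]) be a Gel'fand-Dorfman bialgebra over K, V a vector space, and Ω(A,V) = (l_A, r_A, l_V, r_V, f, ∗, ◁, ▷, h, {·,·}) and Ω'(A,V) = (l_A', r_A', l_V', r_V', f', ∗', ◁', ▷', h', {·,·}') two GD extending structures of A by V, with unified products A♮V and A♮'V. Then the assignment (λ,μ) ↦ φ_{λ,μ}, where φ_{λ,μ}(a,x) = (a + λ(x), μ(x)), is a bijection between the set of pairs (λ,μ) consisting of a linear map λ : V → A and a linear automorphism μ : V → V satisfying, for all a ∈ A, x,y ∈ V: (D1) r_A(a)x = μ⁻¹(r_A'(a)μ(x)); (D2) l_A(a)x = μ⁻¹(l_A'(a)μ(x)); (D3) l_V(x)a = λ(x)∘a + l_V'(μ(x))a − λ(μ⁻¹(r_A'(a)μ(x))); (D4) r_V(x)a = a∘λ(x) + r_V'(μ(x))a − λ(μ⁻¹(l_A'(a)μ(x))); (D5) x∗y = μ⁻¹(μ(x)∗'μ(y)) + μ⁻¹(l_A'(λ(x))μ(y)) + μ⁻¹(r_A'(λ(y))μ(x)); (D6)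 f(x,y) = λ(x)∘λ(y) + l_V'(μ(x))λ(y) + r_V'(μ(y))λ(x) + f'(μ(x),μ(y)) − λ(μ⁻¹(μ(x)∗'μ(y))) − λ(μ⁻¹(l_A'(λ(x))μ(y))) − λ(μ⁻¹(r_A'(λ(y))μ(x))); (D7) x◁a = μ⁻¹(μ(x)◁'a); (D8) x▷a = [λ(x),a] + μ(x)▷'a − λ(μ⁻¹(μ(x)◁'a)); (D9) h(x,y) = [λ(x),λ(y)] + μ(x)▷'λ(y) − μ(y)▷'λ(x) + h'(μ(x),μ(y)) − λ(μ⁻¹({μ(x),μ(y)}')) − λ(μ⁻¹(μ(x)◁'λ(y))) + λ(μ⁻¹(μ(y)◁'λ(x))); (D10) {x,y} = μ⁻¹({μ(x),μ(y)}') + μ⁻¹(μ(x)◁'λ(y)) − μ⁻¹(μ(y)◁'λ(x)), and the set of GD bialgebra isomorphisms φ : A♮V → A♮'V whose restriction to A (i.e. to A×{0}) is the identity map. -/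
namespace GDExt

variable (K : Type*) [Field K]
variable (A V : Type*) [AddCommGroup A] [Module K A] [AddCommGroup V] [Module K V]

/-- An extending datum of a GD bialgebra `A` by a vector space `V`. -/
structure ExtDatum where
  lA : A →ₗ[K] Module.End K V
  rA : A →ₗ[K] Module.End K V
  lV : V →ₗ[K] Module.End K A
  rV : V →ₗ[K] Module.End K A
  f : V →ₗ[K] V →ₗ[K] A
  st : V →ₗ[K] V →ₗ[K] V
  tl : V →ₗ[K] A →ₗ[K] V
  tr : V →ₗ[K] A →ₗ[K] A
  hm : V →ₗ[K] V →ₗ[K] A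
  vbr : V →ₗ[K] V →ₗ[K] V

variable {K A V}

/-- The multiplication of the unified product associated to an extending datum. -/
def ExtDatum.mulMap (circ : A →ₗ[K] A →ₗ[K] A) (ω : ExtDatum K A V) : A × V → A × V → A × V :=
  uniMul circ ω.lA ω.rA ω.lV ω.rV ω.f ω.st

/-- The bracket of the unified product associated to an extending datum. -/
def ExtDatum.brMap (brk : A →ₗ[K] A →ₗ[K] A) (ω : ExtDatum K A V) : A × V → A × V → A × V :=
  uniBr brk ω.tl ω.tr ω.hm ω.vbr

/-- Conditions (D1)-(D10) relating two extending data via a pair `(λ, μ)`. -/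
def DCond (circ brk : A →ₗ[K] A →ₗ[K] A) (ω ω' : ExtDatum K A V)
    (l : V →ₗ[K] A) (m : V ≃ₗ[K] V) : Prop :=
  -- (D1)
  (∀ (a : A) (x : V), ω.rA a x = m.symm (ω'.rA a (m x))) ∧
  -- (D2)
  (∀ (a : A) (x : V), ω.lA a x = m.symm (ω'.lA a (m x))) ∧
  -- (D3)
  (∀ (a : A) (x : V), ω.lV x a = circ (l x) a + ω'.lV (m x) a - l (m.symm (ω'.rA a (m x)))) ∧
  -- (D4)
  (∀ (a : A) (x : V), ω.rV x a = circ a (l x) + ω'.rV (m x) a - l (m.symm (ω'.lA a (m x)))) ∧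
  -- (D5)
  (∀ x y : V, ω.st x y = m.symm (ω'.st (m x) (m y)) + m.symm (ω'.lA (l x) (m y))
      + m.symm (ω'.rA (l y) (m x))) ∧
  -- (D6)
  (∀ x y : V, ω.f x y = circ (l x) (l y) + ω'.lV (m x) (l y) + ω'.rV (m y) (l x)
      + ω'.f (m x) (m y) - l (m.symm (ω'.st (m x) (m y))) - l (m.symm (ω'.lA (l x) (m y)))
      - l (m.symm (ω'.rA (l y) (m x)))) ∧
  -- (D7)
  (∀ (a : A) (x : V), ω.tl x a = m.symm (ω'.tl (m x) a)) ∧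
  -- (D8)
  (∀ (a : A) (x : V), ω.tr x a = brk (l x) a + ω'.tr (m x) a - l (m.symm (ω'.tl (m x) a))) ∧
  -- (D9)
  (∀ x y : V, ω.hm x y = brk (l x) (l y) + ω'.tr (m x) (l y) - ω'.tr (m y) (l x)
      + ω'.hm (m x) (m y) - l (m.symm (ω'.vbr (m x) (m y))) - l (m.symm (ω'.tl (m x) (l y)))
      + l (m.symm (ω'.tl (m y) (l x)))) ∧
  -- (D10)
  (∀ x y : V, ω.vbr x y = m.symm (ω'.vbr (m x) (m y)) + m.symm (ω'.tl (m x) (l y))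
      - m.symm (ω'.tl (m y) (l x)))

/-- Two extending data are equivalent if they are related by some pair `(λ, μ)`
via conditions (D1)-(D10). -/
def DEquiv (circ brk : A →ₗ[K] A →ₗ[K] A) (ω ω' : ExtDatum K A V) : Prop :=
  ∃ (l : V →ₗ[K] A) (m : V ≃ₗ[K] V), DCond circ brk ω ω' l m

end GDExt

namespace GDExt

/-- Lemma 3.5: pairs `(λ, μ)` satisfying (D1)-(D10) correspond bijectively,
via `(λ,μ) ↦ φ_{λ,μ}`, to GD bialgebra isomorphisms `A ♮ V → A ♮' V` restricting to the
identity on `A`. -/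
theorem iso_of_unified_products_bijection
    {K A V : Type*} [Field K] [AddCommGroup A] [Module K A] [AddCommGroup V] [Module K V]
    (circ brk : A →ₗ[K] A →ₗ[K] A)
    (hGD : IsGD (fun a b => circ a b) (fun a b => brk a b))
    (ω ω' : ExtDatum K A V)
    (hω : IsGD (ω.mulMap circ) (ω.brMap brk))
    (hω' : IsGD (ω'.mulMap circ) (ω'.brMap brk)) :
    Set.BijOn
      (fun lm : (V →ₗ[K] A) × (V ≃ₗ[K] V) =>
        fun p : A × V => ((p.1 + lm.1 p.2, lm.2 p.2) : A × V))
      {lm | DCond circ brk ω ω' lm.1 lm.2}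
      {φ | IsLinearMap K φ ∧ Function.Bijective φ ∧
           (∀ p q : A × V, φ (ω.mulMap circ p q) = ω'.mulMap circ (φ p) (φ q)) ∧
           (∀ p q : A × V, φ (ω.brMap brk p q) = ω'.brMap brk (φ p) (φ q)) ∧
           (∀ a : A, φ (a, 0) = (a, 0))} := by
  classical
  constructor
  · -- MapsTo
    rintro ⟨l, m⟩ ⟨d1, d2, d3, d4, d5, d6, d7, d8, d9, d10⟩
    have hanti : ∀ u v : A, brk v u = - brk u v := by
      intro u v
      have h0 := hGD.2.1.1
      have h := h0 (u + v)
      simp only [map_add, LinearMap.add_apply, h0 u, h0 v, add_zero, zero_add,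
        add_eq_zero_iff_eq_neg] at h
      exact h
    refine ⟨⟨fun p q => ?_, fun c p => ?_⟩, ?_, fun p q => ?_, fun p q => ?_, fun a => ?_⟩
    · rw [Prod.ext_iff]
      constructor <;> simp only [Prod.fst_add, Prod.snd_add, map_add, Prod.mk_add_mk] <;> abel
    · rw [Prod.ext_iff]
      constructor <;> simp [Prod.smul_fst, Prod.smul_snd, map_smul, smul_add]
    · refine Function.bijective_iff_has_inverse.mpr
        ⟨fun p => (p.1 - l (m.symm p.2), m.symm p.2), fun p => ?_, fun p => ?_⟩ <;> simp
    · obtain ⟨a, x⟩ := p; obtain ⟨b, y⟩ := q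
      simp only [ExtDatum.mulMap, uniMul, Prod.mk.injEq, d1, d2, d3, d4, d5, d6,
        map_add, map_sub, LinearMap.add_apply, LinearMap.sub_apply,
        LinearEquiv.apply_symm_apply]
      constructor <;> abel
    · obtain ⟨a, x⟩ := p; obtain ⟨b, y⟩ := q
      simp only [ExtDatum.brMap, uniBr, Prod.mk.injEq, d7, d8, d9, d10,
        map_add, map_sub, LinearMap.add_apply, LinearMap.sub_apply,
        LinearEquiv.apply_symm_apply, hanti a (l y)]
      constructor <;> abel
    · simp
  constructor
  · -- InjOn
    rintro ⟨l, m⟩ - ⟨l', m'⟩ - heq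
    have h : ∀ x : V, ((0 : A) + l x, m x) = ((0 : A) + l' x, m' x) := fun x =>
      congrFun heq ((0 : A), x)
    have hl : l = l' := LinearMap.ext fun x => by
      have := congrArg Prod.fst (h x); simpa using this
    have hm : m = m' := LinearEquiv.ext fun x => congrArg Prod.snd (h x)
    simp [hl, hm]
  · -- SurjOn
    rintro φ ⟨hlin, hbij, hmul, hbr, hA⟩
    obtain ⟨hadd, hsmul⟩ := hlin
    have hz : ∀ x y : V, ((0 : A), x) + ((0 : A), y) = ((0 : A), x + y) := by
      intro x y; simp
    have hzs : ∀ (c : K) (x : V), c • (((0 : A), x) : A × V) = ((0 : A), c • x) := by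
      intro c x; simp
    let l : V →ₗ[K] A :=
      { toFun := fun x => (φ (0, x)).1
        map_add' := fun x y => by
          show (φ (0, x + y)).1 = (φ (0, x)).1 + (φ (0, y)).1
          rw [← hz, hadd]; rfl
        map_smul' := fun c x => by
          show (φ (0, c • x)).1 = c • (φ (0, x)).1
          rw [← hzs, hsmul]; rfl }
    let m0 : V →ₗ[K] V :=
      { toFun := fun x => (φ (0, x)).2
        map_add' := fun x y => by
          show (φ (0, x + y)).2 = (φ (0, x)).2 + (φ (0, y)).2
          rw [← hz, hadd]; rfl
        map_smul' := fun c x => by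
          show (φ (0, c • x)).2 = c • (φ (0, x)).2
          rw [← hzs, hsmul]; rfl }
    have key : ∀ p : A × V, φ p = (p.1 + l p.2, m0 p.2) := by
      intro p
      have h2 : ((p.1, 0) : A × V) + (0, p.2) = p := by simp
      calc φ p = φ (p.1, 0) + φ (0, p.2) := by rw [← hadd, h2]
        _ = (p.1, 0) + (l p.2, m0 p.2) := by rw [hA]; rfl
        _ = (p.1 + l p.2, m0 p.2) := by simp
    have hminj : Function.Injective m0 := by
      intro x y hxy
      have h := hbij.1 (a₁ := (l y - l x, x)) (a₂ := (0, y)) (by rw [key, key]; simp [hxy])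
      exact congrArg Prod.snd h
    have hmsurj : Function.Surjective m0 := by
      intro y
      obtain ⟨p, hp⟩ := hbij.2 ((0 : A), y)
      refine ⟨p.2, ?_⟩
      have h2 := congrArg Prod.snd hp
      rw [key p] at h2
      exact h2
    let m : V ≃ₗ[K] V := LinearEquiv.ofBijective m0 ⟨hminj, hmsurj⟩
    have hmc : ∀ x, m x = m0 x := fun _ => rfl
    have hsymm : ∀ z, m.symm (m0 z) = z := fun z => by
      rw [← hmc]; exact m.symm_apply_apply z
    -- P facts from multiplicativity / bracket at special points
    have P12 : ∀ (a : A) (x : V),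
        ω.rV x a + l (ω.lA a x) = circ a (l x) + ω'.rV (m0 x) a ∧
        m0 (ω.lA a x) = ω'.lA a (m0 x) := by
      intro a x
      have h := hmul (a, 0) (0, x)
      simp only [ExtDatum.mulMap, uniMul, key, map_zero, LinearMap.zero_apply, add_zero,
        zero_add, Prod.mk.injEq] at h
      exact h
    have P34 : ∀ (a : A) (x : V),
        ω.lV x a + l (ω.rA a x) = circ (l x) a + ω'.lV (m0 x) a ∧
        m0 (ω.rA a x) = ω'.rA a (m0 x) := by
      intro a x
      have h := hmul (0, x) (a, 0)
      simp only [ExtDatum.mulMap, uniMul, key, map_zero, LinearMap.zero_apply, add_zero,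
        zero_add, Prod.mk.injEq] at h
      exact h
    have P56 : ∀ x y : V,
        ω.f x y + l (ω.st x y) =
          circ (l x) (l y) + ω'.lV (m0 x) (l y) + ω'.rV (m0 y) (l x) + ω'.f (m0 x) (m0 y) ∧
        m0 (ω.st x y) = ω'.st (m0 x) (m0 y) + ω'.lA (l x) (m0 y) + ω'.rA (l y) (m0 x) := by
      intro x y
      have h := hmul (0, x) (0, y)
      simp only [ExtDatum.mulMap, uniMul, key, map_zero, LinearMap.zero_apply, add_zero,
        zero_add, Prod.mk.injEq] at h
      exact h
    have P78 : ∀ (a : A) (x : V),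
        ω.tr x a + l (ω.tl x a) = brk (l x) a + ω'.tr (m0 x) a ∧
        m0 (ω.tl x a) = ω'.tl (m0 x) a := by
      intro a x
      have h := hbr (0, x) (a, 0)
      simp only [ExtDatum.brMap, uniBr, key, map_zero, LinearMap.zero_apply, add_zero,
        zero_add, sub_zero, zero_sub, Prod.mk.injEq] at h
      exact h
    have P910 : ∀ x y : V,
        ω.hm x y + l (ω.vbr x y) =
          brk (l x) (l y) + ω'.tr (m0 x) (l y) - ω'.tr (m0 y) (l x) + ω'.hm (m0 x) (m0 y) ∧
        m0 (ω.vbr x y) = ω'.vbr (m0 x) (m0 y) + ω'.tl (m0 x) (l y) - ω'.tl (m0 y) (l x) := by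
      intro x y
      have h := hbr (0, x) (0, y)
      simp only [ExtDatum.brMap, uniBr, key, map_zero, LinearMap.zero_apply, add_zero,
        zero_add, sub_zero, zero_sub, Prod.mk.injEq] at h
      exact h
    -- derive the D conditions
    have Q1 : ∀ (a : A) (x : V), ω.rA a x = m.symm (ω'.rA a (m0 x)) := by
      intro a x
      rw [← (P34 a x).2, hsymm]
    have Q2 : ∀ (a : A) (x : V), ω.lA a x = m.symm (ω'.lA a (m0 x)) := by
      intro a x
      rw [← (P12 a x).2, hsymm]
    have Q3 : ∀ (a : A) (x : V),
        ω.lV x a = circ (l x) a + ω'.lV (m0 x) a - l (m.symm (ω'.rA a (m0 x))) := by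
      intro a x
      rw [← Q1]
      exact eq_sub_of_add_eq (P34 a x).1
    have Q4 : ∀ (a : A) (x : V),
        ω.rV x a = circ a (l x) + ω'.rV (m0 x) a - l (m.symm (ω'.lA a (m0 x))) := by
      intro a x
      rw [← Q2]
      exact eq_sub_of_add_eq (P12 a x).1
    have Q5 : ∀ x y : V,
        ω.st x y = m.symm (ω'.st (m0 x) (m0 y)) + m.symm (ω'.lA (l x) (m0 y))
          + m.symm (ω'.rA (l y) (m0 x)) := by
      intro x y
      rw [← map_add, ← map_add, ← (P56 x y).2, hsymm]
    have Q7 : ∀ (a : A) (x : V), ω.tl x a = m.symm (ω'.tl (m0 x) a) := by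
      intro a x
      rw [← (P78 a x).2, hsymm]
    have Q8 : ∀ (a : A) (x : V),
        ω.tr x a = brk (l x) a + ω'.tr (m0 x) a - l (m.symm (ω'.tl (m0 x) a)) := by
      intro a x
      rw [← Q7]
      exact eq_sub_of_add_eq (P78 a x).1
    have Q10 : ∀ x y : V,
        ω.vbr x y = m.symm (ω'.vbr (m0 x) (m0 y)) + m.symm (ω'.tl (m0 x) (l y))
          - m.symm (ω'.tl (m0 y) (l x)) := by
      intro x y
      rw [← map_add, ← map_sub, ← (P910 x y).2, hsymm]
    have Q6 : ∀ x y : V,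
        ω.f x y = circ (l x) (l y) + ω'.lV (m0 x) (l y) + ω'.rV (m0 y) (l x)
          + ω'.f (m0 x) (m0 y) - l (m.symm (ω'.st (m0 x) (m0 y)))
          - l (m.symm (ω'.lA (l x) (m0 y))) - l (m.symm (ω'.rA (l y) (m0 x))) := by
      intro x y
      have h6 := eq_sub_of_add_eq (P56 x y).1
      have h5 : l (ω.st x y) = l (m.symm (ω'.st (m0 x) (m0 y))) + l (m.symm (ω'.lA (l x) (m0 y)))
          + l (m.symm (ω'.rA (l y) (m0 x))) := by rw [Q5 x y, map_add, map_add]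
      rw [h6, h5]; abel
    have Q9 : ∀ x y : V,
        ω.hm x y = brk (l x) (l y) + ω'.tr (m0 x) (l y) - ω'.tr (m0 y) (l x)
          + ω'.hm (m0 x) (m0 y) - l (m.symm (ω'.vbr (m0 x) (m0 y)))
          - l (m.symm (ω'.tl (m0 x) (l y))) + l (m.symm (ω'.tl (m0 y) (l x))) := by
      intro x y
      have h9 := eq_sub_of_add_eq (P910 x y).1
      have h10 : l (ω.vbr x y) = l (m.symm (ω'.vbr (m0 x) (m0 y)))
          + l (m.symm (ω'.tl (m0 x) (l y))) - l (m.symm (ω'.tl (m0 y) (l x))) := by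
        rw [Q10 x y, map_sub, map_add]
      rw [h9, h10]; abel
    exact ⟨(l, m), ⟨Q1, Q2, Q3, Q4, Q5, Q6, Q7, Q8, Q9, Q10⟩, funext fun p => (key p).symm⟩

end GDExt
end

section
/- Let (A,∘,[·,·]) be a Gel'fand-Dorfman bialgebra over K, E a vector space containing A as a subspace, and V a complement of A in E (so E = A ⊕ V). Define two GD extending structures Ω(A,V) and Ω'(A,V) of A by V to be equivalent (Ω ≡ Ω') if there exist a linear map λ : V → A and a linear automorphism μ : V → V satisfying conditions (D1)–(D10) relating the two data, and let GH²(V,A) denote the quotient of the set GD(A,V) of all GD extending structures by ≡. Then the map GH²(V,A) → Extd(E,A) sending the equivalence class of Ω(A,V) to the equivalence class of the unified product A♮V (transported to E along E = A ⊕ V) is a bijection. -/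
namespace GDExt

variable {K E : Type*} [Field K] [AddCommGroup E] [Module K E]

/-- The GD bialgebra structures on `E` containing the GD bialgebra `(A, circ, brk)`
as a subalgebra (i.e. restricting to the given operations on `A`). -/
def GDStrOn (A : Submodule K E) (circ brk : ↥A →ₗ[K] ↥A →ₗ[K] ↥A) : Type _ :=
  {s : (E →ₗ[K] E →ₗ[K] E) × (E →ₗ[K] E →ₗ[K] E) //
    IsGD (fun u v => s.1 u v) (fun u v => s.2 u v) ∧
    ∀ a b : ↥A, s.1 a b = ((circ a b : ↥A) : E) ∧ s.2 a b = ((brk a b : ↥A) : E)}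

/-- Equivalence of GD bialgebra structures on `E` containing `A` as a subalgebra:
there is a GD bialgebra isomorphism whose restriction to `A` is the identity. -/
def GDStrEquiv (A : Submodule K E) (circ brk : ↥A →ₗ[K] ↥A →ₗ[K] ↥A)
    (s s' : GDStrOn A circ brk) : Prop :=
  ∃ φ : E ≃ₗ[K] E,
    (∀ u v : E, φ (s.1.1 u v) = s'.1.1 (φ u) (φ v)) ∧
    (∀ u v : E, φ (s.1.2 u v) = s'.1.2 (φ u) (φ v)) ∧
    (∀ a : ↥A, φ (a : E) = (a : E))

end GDExt

/-!
Write `E = A ⊕ V`. A GD bialgebra structure on `E` containing `A` is determined by its two products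
on pairs from `A` and `V`, and splitting these into their `A`- and `V`-components yields an
extending datum whose unified product is the given structure; conversely every unified product
transports to such a structure on `E`. A linear automorphism of `A × V` fixing `A` is a shear
`(a, x) ↦ (a + λ x, μ x)`, and conditions (D1)–(D10) say exactly that this shear is an isomorphism
between the two unified products (for the bracket this uses the skew-symmetry of the bracket of
`A`). Hence the equivalences on both sides correspond, which gives injectivity, and the first
remark gives surjectivity.
-/

namespace GDExt

section LinearAlgebra

variable {M N : Type*}

theorem IsGD.transfer [AddCommGroup M] [AddCommGroup N] (e : M ≃+ N) {mul br : M → M → M}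
    (h : IsGD mul br) :
    IsGD (fun u v => e (mul (e.symm u) (e.symm v))) (fun u v => e (br (e.symm u) (e.symm v))) := by
  obtain ⟨⟨hleft, hright⟩, ⟨halt, hjacobi⟩, hcompat⟩ := h
  refine ⟨⟨fun a b c => ?_, fun a b c => ?_⟩, ⟨fun a => ?_, fun a b c => ?_⟩, fun a b c => ?_⟩ <;>
    simp only [AddEquiv.symm_apply_apply, ← map_sub, ← map_add, map_eq_zero_iff _ e.injective]
  exacts [congrArg e (hleft _ _ _), congrArg e (hright _ _ _), halt _, congrArg e (hjacobi _ _ _),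
    hcompat _ _ _]

variable {R : Type*} [CommSemiring R] [AddCommMonoid M] [Module R M] [AddCommMonoid N] [Module R N]

def bilinMapCongr (e : M ≃ₗ[R] N) : (M →ₗ[R] M →ₗ[R] M) ≃ₗ[R] (N →ₗ[R] N →ₗ[R] N) :=
  e.arrowCongr (e.arrowCongr e)

@[simp] theorem bilinMapCongr_apply (e : M ≃ₗ[R] N) (B : M →ₗ[R] M →ₗ[R] M) (u v : N) :
    bilinMapCongr e B u v = e (B (e.symm u) (e.symm v)) := rfl

@[simp] theorem bilinMapCongr_symm_apply (e : M ≃ₗ[R] N) (B : N →ₗ[R] N →ₗ[R] N) (u v : M) :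
    (bilinMapCongr e).symm B u v = e.symm (B (e u) (e v)) := rfl

theorem bilin_apply_prod_mk {W : Type*} [AddCommMonoid W] [Module R W]
    (B : (M × N) →ₗ[R] (M × N) →ₗ[R] W) (a b : M) (x y : N) :
    B (a, x) (b, y) = B (a, 0) (b, 0) + B (a, 0) (0, y) + B (0, x) (b, 0) + B (0, x) (0, y) := by
  have hsplit (c : M) (z : N) : ((c, z) : M × N) = (c, 0) + (0, z) := by simp
  rw [hsplit a x, hsplit b y, map_add, map_add, LinearMap.add_apply, LinearMap.add_apply]
  abel

end LinearAlgebra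

section Shear

variable {R : Type*} [Ring R] {A V : Type*} [AddCommGroup A] [Module R A] [AddCommGroup V]
  [Module R V]

def shear (l : V →ₗ[R] A) (m : V ≃ₗ[R] V) : (A × V) ≃ₗ[R] A × V :=
  ((LinearEquiv.prodComm R A V).trans (m.skewProd (LinearEquiv.refl R A) l)).trans
    (LinearEquiv.prodComm R V A)

@[simp] theorem shear_apply (l : V →ₗ[R] A) (m : V ≃ₗ[R] V) (p : A × V) :
    shear l m p = (p.1 + l p.2, m p.2) := rfl

theorem exists_shear_eq (Ψ : (A × V) ≃ₗ[R] A × V) (hΨ : ∀ a, Ψ (a, 0) = (a, 0)) :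
    ∃ l m, Ψ = shear l m := by
  set l := LinearMap.fst R A V ∘ₗ Ψ.toLinearMap ∘ₗ LinearMap.inr R A V
  set m₀ := LinearMap.snd R A V ∘ₗ Ψ.toLinearMap ∘ₗ LinearMap.inr R A V
  have hΨ_apply (p : A × V) : Ψ p = (p.1 + l p.2, m₀ p.2) := by
    calc Ψ p = Ψ (p.1, 0) + Ψ (0, p.2) := by rw [← map_add, Prod.mk_add_mk, add_zero, zero_add]
      _ = (p.1 + l p.2, m₀ p.2) := by rw [hΨ]; ext <;> simp [l, m₀]
  have hm₀ : Function.Bijective m₀ := by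
    refine ⟨fun x y hxy => ?_, fun y => ⟨(Ψ.symm (0, y)).2, ?_⟩⟩
    · have := Ψ.injective (a₁ := (-l x + l y, x)) (a₂ := (0, y)) (by simp [hΨ_apply, hxy])
      exact congrArg Prod.snd this
    · simpa [← hΨ_apply] using congrArg Prod.snd (hΨ_apply (Ψ.symm (0, y))).symm
  exact ⟨l, LinearEquiv.ofBijective m₀ hm₀, LinearEquiv.ext hΨ_apply⟩

end Shear

section UnifiedProduct

variable {K : Type*} [Field K]
variable {A V : Type*} [AddCommGroup A] [Module K A] [AddCommGroup V] [Module K V]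

variable (V) in
abbrev GDExtStr (circ brk : A →ₗ[K] A →ₗ[K] A) : Type _ :=
  {ω : ExtDatum K A V // IsGD (ω.mulMap circ) (ω.brMap brk)}

def ExtDatum.mulHom (circ : A →ₗ[K] A →ₗ[K] A) (ω : ExtDatum K A V) :
    (A × V) →ₗ[K] (A × V) →ₗ[K] A × V :=
  LinearMap.mk₂ K (ω.mulMap circ)
    (fun _ _ _ => by ext <;> simp [ExtDatum.mulMap, uniMul] <;> abel)
    (fun _ _ _ => by ext <;> simp [ExtDatum.mulMap, uniMul])
    (fun _ _ _ => by ext <;> simp [ExtDatum.mulMap, uniMul] <;> abel)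
    (fun _ _ _ => by ext <;> simp [ExtDatum.mulMap, uniMul])

def ExtDatum.brHom (brk : A →ₗ[K] A →ₗ[K] A) (ω : ExtDatum K A V) :
    (A × V) →ₗ[K] (A × V) →ₗ[K] A × V :=
  LinearMap.mk₂ K (ω.brMap brk)
    (fun _ _ _ => by ext <;> simp [ExtDatum.brMap, uniBr] <;> abel)
    (fun _ _ _ => by ext <;> simp [ExtDatum.brMap, uniBr, smul_sub])
    (fun _ _ _ => by ext <;> simp [ExtDatum.brMap, uniBr] <;> abel)
    (fun _ _ _ => by ext <;> simp [ExtDatum.brMap, uniBr, smul_sub])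

@[simp] theorem ExtDatum.mulHom_apply (circ : A →ₗ[K] A →ₗ[K] A) (ω : ExtDatum K A V)
    (p q : A × V) : ω.mulHom circ p q = ω.mulMap circ p q := rfl

@[simp] theorem ExtDatum.brHom_apply (brk : A →ₗ[K] A →ₗ[K] A) (ω : ExtDatum K A V)
    (p q : A × V) : ω.brHom brk p q = ω.brMap brk p q := rfl

theorem ExtDatum.mulMap_inl_inl (circ : A →ₗ[K] A →ₗ[K] A) (ω : ExtDatum K A V) (a b : A) :
    ω.mulMap circ (a, 0) (b, 0) = (circ a b, 0) := by
  simp [ExtDatum.mulMap, uniMul]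

theorem ExtDatum.brMap_inl_inl (brk : A →ₗ[K] A →ₗ[K] A) (ω : ExtDatum K A V) (a b : A) :
    ω.brMap brk (a, 0) (b, 0) = (brk a b, 0) := by
  simp [ExtDatum.brMap, uniBr]

open LinearMap in
def ExtDatum.ofBilin (S B : (A × V) →ₗ[K] (A × V) →ₗ[K] A × V) : ExtDatum K A V where
  lA := (S.compl₁₂ (inl K A V) (inr K A V)).compr₂ (snd K A V)
  rA := (S.flip.compl₁₂ (inl K A V) (inr K A V)).compr₂ (snd K A V)
  lV := (S.compl₁₂ (inr K A V) (inl K A V)).compr₂ (fst K A V)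
  rV := (S.flip.compl₁₂ (inr K A V) (inl K A V)).compr₂ (fst K A V)
  f := (S.compl₁₂ (inr K A V) (inr K A V)).compr₂ (fst K A V)
  st := (S.compl₁₂ (inr K A V) (inr K A V)).compr₂ (snd K A V)
  tl := (B.compl₁₂ (inr K A V) (inl K A V)).compr₂ (snd K A V)
  tr := (B.compl₁₂ (inr K A V) (inl K A V)).compr₂ (fst K A V)
  hm := (B.compl₁₂ (inr K A V) (inr K A V)).compr₂ (fst K A V)
  vbr := (B.compl₁₂ (inr K A V) (inr K A V)).compr₂ (snd K A V)

theorem ExtDatum.ofBilin_mulMap {S B : (A × V) →ₗ[K] (A × V) →ₗ[K] A × V}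
    {circ : A →ₗ[K] A →ₗ[K] A} (hS : ∀ a b, S (a, 0) (b, 0) = (circ a b, 0)) (p q : A × V) :
    (ExtDatum.ofBilin S B).mulMap circ p q = S p q := by
  rw [bilin_apply_prod_mk S p.1 q.1 p.2 q.2, hS]
  ext <;> simp [ExtDatum.mulMap, uniMul, ExtDatum.ofBilin] <;> abel

theorem ExtDatum.ofBilin_brMap {S B : (A × V) →ₗ[K] (A × V) →ₗ[K] A × V}
    {brk : A →ₗ[K] A →ₗ[K] A} (hB : B.IsAlt) (hBA : ∀ a b, B (a, 0) (b, 0) = (brk a b, 0))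
    (p q : A × V) :
    (ExtDatum.ofBilin S B).brMap brk p q = B p q := by
  rw [bilin_apply_prod_mk B p.1 q.1 p.2 q.2, hBA, ← hB.neg (0, q.2)]
  ext <;> simp [ExtDatum.brMap, uniBr, ExtDatum.ofBilin] <;> abel

variable {circ brk : A →ₗ[K] A →ₗ[K] A} {ω ω' : ExtDatum K A V} {l : V →ₗ[K] A} {m : V ≃ₗ[K] V}

theorem DCond.shear_mulMap (hd : DCond circ brk ω ω' l m) (p q : A × V) :
    shear l m (ω.mulMap circ p q) = ω'.mulMap circ (shear l m p) (shear l m q) := by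
  obtain ⟨d1, d2, d3, d4, d5, d6, -⟩ := hd
  simp only [ExtDatum.mulMap, uniMul, shear_apply, Prod.mk.injEq]
  rw [d3, d4, d6, d5, d2, d1]
  constructor
  · simp only [map_add, LinearMap.add_apply]
    abel
  · simp only [map_add, LinearMap.add_apply, LinearEquiv.apply_symm_apply]
    abel

theorem DCond.shear_brMap (hbrk : brk.IsAlt) (hd : DCond circ brk ω ω' l m) (p q : A × V) :
    shear l m (ω.brMap brk p q) = ω'.brMap brk (shear l m p) (shear l m q) := by
  obtain ⟨-, -, -, -, -, -, d7, d8, d9, d10⟩ := hd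
  simp only [ExtDatum.brMap, uniBr, shear_apply, Prod.mk.injEq]
  rw [d8, d8, d9, d10, d7, d7]
  constructor
  · simp only [map_add, map_sub, LinearMap.add_apply]
    rw [← hbrk.neg p.1 (l q.2)]
    abel
  · simp only [map_add, map_sub, LinearEquiv.apply_symm_apply]
    abel

theorem DCond.of_shear
    (hmul : ∀ p q, shear l m (ω.mulMap circ p q) = ω'.mulMap circ (shear l m p) (shear l m q))
    (hbr : ∀ p q, shear l m (ω.brMap brk p q) = ω'.brMap brk (shear l m p) (shear l m q)) :
    DCond circ brk ω ω' l m := by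
  have mul_VA (x : V) (b : A) := hmul (0, x) (b, 0)
  have mul_AV (a : A) (y : V) := hmul (a, 0) (0, y)
  have mul_VV (x y : V) := hmul (0, x) (0, y)
  have br_VA (x : V) (b : A) := hbr (0, x) (b, 0)
  have br_VV (x y : V) := hbr (0, x) (0, y)
  simp only [ExtDatum.mulMap, ExtDatum.brMap, uniMul, uniBr, shear_apply, Prod.ext_iff, map_zero,
    LinearMap.zero_apply, zero_add, add_zero, sub_zero] at mul_VA mul_AV mul_VV br_VA br_VV
  have d1 (b : A) (x : V) : ω.rA b x = m.symm (ω'.rA b (m x)) :=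
    m.eq_symm_apply.2 (mul_VA x b).2
  have d2 (a : A) (y : V) : ω.lA a y = m.symm (ω'.lA a (m y)) :=
    m.eq_symm_apply.2 (mul_AV a y).2
  have d5 (x y : V) : ω.st x y = m.symm (ω'.st (m x) (m y)) + m.symm (ω'.lA (l x) (m y))
      + m.symm (ω'.rA (l y) (m x)) := by
    rw [← map_add, ← map_add]
    exact m.eq_symm_apply.2 (mul_VV x y).2
  have d7 (b : A) (x : V) : ω.tl x b = m.symm (ω'.tl (m x) b) :=
    m.eq_symm_apply.2 (br_VA x b).2
  have d10 (x y : V) : ω.vbr x y = m.symm (ω'.vbr (m x) (m y)) + m.symm (ω'.tl (m x) (l y))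
      - m.symm (ω'.tl (m y) (l x)) := by
    rw [← map_add, ← map_sub]
    exact m.eq_symm_apply.2 (br_VV x y).2
  refine ⟨d1, d2, fun b x => ?_, fun a y => ?_, d5, fun x y => ?_, d7, fun b x => ?_,
    fun x y => ?_, d10⟩
  · rw [← d1]
    exact eq_sub_of_add_eq (mul_VA x b).1
  · rw [← d2]
    exact eq_sub_of_add_eq (mul_AV a y).1
  · rw [eq_sub_of_add_eq (mul_VV x y).1, d5]
    simp only [map_add]
    abel
  · rw [← d7]
    exact eq_sub_of_add_eq (br_VA x b).1
  · rw [eq_sub_of_add_eq (br_VV x y).1, d10]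
    simp only [map_add, map_sub]
    abel

end UnifiedProduct

section Complement

variable {K E : Type*} [Field K] [AddCommGroup E] [Module K E] {A V : Submodule K E}
  (hc : IsCompl A V) {circ brk : A →ₗ[K] A →ₗ[K] A}

local notation "ε" => Submodule.prodEquivOfIsCompl A V hc

noncomputable def unifiedStr (ω : GDExtStr V circ brk) : GDStrOn A circ brk :=
  ⟨(bilinMapCongr ε (ω.1.mulHom circ), bilinMapCongr ε (ω.1.brHom brk)),
    ω.2.transfer (ε).toAddEquiv,
    fun a b => by simp [ExtDatum.mulMap_inl_inl, ExtDatum.brMap_inl_inl]⟩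

theorem unifiedStr_mul (ω : GDExtStr V circ brk) (p q : A × V) :
    (unifiedStr hc ω).1.1 (ε p) (ε q) = ε (ω.1.mulMap circ p q) := by
  simp only [unifiedStr, bilinMapCongr_apply, ExtDatum.mulHom_apply, LinearEquiv.symm_apply_apply]

theorem unifiedStr_br (ω : GDExtStr V circ brk) (p q : A × V) :
    (unifiedStr hc ω).1.2 (ε p) (ε q) = ε (ω.1.brMap brk p q) := by
  simp only [unifiedStr, bilinMapCongr_apply, ExtDatum.brHom_apply, LinearEquiv.symm_apply_apply]

theorem unifiedStr_eq {ω : GDExtStr V circ brk} {s : GDStrOn A circ brk}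
    (hmul : ∀ p q, s.1.1 (ε p) (ε q) = ε (ω.1.mulMap circ p q))
    (hbr : ∀ p q, s.1.2 (ε p) (ε q) = ε (ω.1.brMap brk p q)) :
    unifiedStr hc ω = s := by
  refine Subtype.ext (Prod.ext ?_ ?_) <;>
    refine (LinearEquiv.eq_symm_apply (bilinMapCongr ε)).1 (LinearMap.ext₂ fun p q => ?_) <;>
    simp only [bilinMapCongr_symm_apply, ExtDatum.mulHom_apply, ExtDatum.brHom_apply, hmul, hbr,
      LinearEquiv.symm_apply_apply]

noncomputable def GDStrOn.toExtDatum (s : GDStrOn A circ brk) : ExtDatum K A V :=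
  ExtDatum.ofBilin ((bilinMapCongr ε).symm s.1.1) ((bilinMapCongr ε).symm s.1.2)

theorem GDStrOn.toExtDatum_mulMap (s : GDStrOn A circ brk) (p q : A × V) :
    (s.toExtDatum hc).mulMap circ p q = (ε).symm (s.1.1 (ε p) (ε q)) :=
  ExtDatum.ofBilin_mulMap (fun a b => by simp [(s.2.2 a b).1]) p q

theorem GDStrOn.toExtDatum_brMap (s : GDStrOn A circ brk) (p q : A × V) :
    (s.toExtDatum hc).brMap brk p q = (ε).symm (s.1.2 (ε p) (ε q)) := by
  refine ExtDatum.ofBilin_brMap (fun u => ?_) (fun a b => by simp [(s.2.2 a b).2]) p q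
  rw [bilinMapCongr_symm_apply, LinearEquiv.map_eq_zero_iff]
  exact s.2.1.2.1.1 _

theorem GDStrOn.isGD_toExtDatum (s : GDStrOn A circ brk) :
    IsGD ((s.toExtDatum hc).mulMap circ) ((s.toExtDatum hc).brMap brk) := by
  rw [funext₂ (s.toExtDatum_mulMap hc), funext₂ (s.toExtDatum_brMap hc)]
  exact s.2.1.transfer (ε).symm.toAddEquiv

theorem unifiedStr_toExtDatum (s : GDStrOn A circ brk) :
    unifiedStr hc ⟨s.toExtDatum hc, s.isGD_toExtDatum hc⟩ = s :=
  unifiedStr_eq hc (fun p q => by rw [s.toExtDatum_mulMap, LinearEquiv.apply_symm_apply])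
    (fun p q => by rw [s.toExtDatum_brMap, LinearEquiv.apply_symm_apply])

theorem gdStrEquiv_unifiedStr_iff (hbrk : brk.IsAlt) {ω ω' : GDExtStr V circ brk} :
    GDStrEquiv A circ brk (unifiedStr hc ω) (unifiedStr hc ω') ↔ DEquiv circ brk ω.1 ω'.1 := by
  constructor
  · rintro ⟨φ, hmul, hbr, hA⟩
    obtain ⟨l, m, hΨ⟩ := exists_shear_eq (((ε).trans φ).trans (ε).symm) (fun a => by simp [hA])
    refine ⟨l, m, DCond.of_shear (fun p q => ?_) (fun p q => ?_)⟩ <;> rw [← hΨ] <;>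
      apply (ε).injective <;>
      simp only [LinearEquiv.trans_apply, LinearEquiv.apply_symm_apply, ← unifiedStr_mul,
        ← unifiedStr_br, hmul, hbr]
  · rintro ⟨l, m, hd⟩
    refine ⟨(ε).symm.trans ((shear l m).trans ε), fun u v => ?_, fun u v => ?_, fun a => ?_⟩
    · obtain ⟨p, rfl⟩ := (ε).surjective u
      obtain ⟨q, rfl⟩ := (ε).surjective v
      simp only [LinearEquiv.trans_apply, LinearEquiv.symm_apply_apply, unifiedStr_mul,
        hd.shear_mulMap]
    · obtain ⟨p, rfl⟩ := (ε).surjective u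
      obtain ⟨q, rfl⟩ := (ε).surjective v
      simp only [LinearEquiv.trans_apply, LinearEquiv.symm_apply_apply, unifiedStr_br,
        hd.shear_brMap hbrk]
    · simp

variable (circ brk) in
theorem gdStrEquiv_equivalence : Equivalence (GDStrEquiv A circ brk) where
  refl _ := ⟨LinearEquiv.refl K E, fun _ _ => rfl, fun _ _ => rfl, fun _ => rfl⟩
  symm := by
    rintro s s' ⟨φ, hmul, hbr, hA⟩
    refine ⟨φ.symm, fun u v => φ.injective ?_, fun u v => φ.injective ?_,
      fun a => φ.injective ?_⟩ <;>
      simp only [LinearEquiv.apply_symm_apply, hmul, hbr, hA]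
  trans := by
    rintro s s' s'' ⟨φ, hmul, hbr, hA⟩ ⟨ψ, hmul', hbr', hA'⟩
    exact ⟨φ.trans ψ, fun u v => by simp only [LinearEquiv.trans_apply, hmul, hmul'],
      fun u v => by simp only [LinearEquiv.trans_apply, hbr, hbr'],
      fun a => by simp only [LinearEquiv.trans_apply, hA, hA']⟩

end Complement

/-- Theorem 3.6: `GH²(V,A) = GD(A,V)/≡ → Extd(E,A)`, sending the class of an
extending structure to the class of its unified product (transported to `E = A ⊕ V`),
is a bijection. -/
theorem GHsq_bijective_extd
    {K E : Type*} [Field K] [AddCommGroup E] [Module K E]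
    (A V : Submodule K E) (hc : IsCompl A V)
    (circ brk : ↥A →ₗ[K] ↥A →ₗ[K] ↥A)
    (hGD : IsGD (fun a b => circ a b) (fun a b => brk a b)) :
    ∃ G : Quot (fun ω ω' : {ω : ExtDatum K ↥A ↥V // IsGD (ω.mulMap circ) (ω.brMap brk)} =>
            DEquiv circ brk ω.1 ω'.1)
        → Quot (GDStrEquiv A circ brk),
      Function.Bijective G ∧
      ∀ (ω : {ω : ExtDatum K ↥A ↥V // IsGD (ω.mulMap circ) (ω.brMap brk)})
        (s : GDStrOn A circ brk),
        (∀ (a b : ↥A) (x y : ↥V),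
          s.1.1 ((a : E) + (x : E)) ((b : E) + (y : E))
            = ((ω.1.mulMap circ (a, x) (b, y)).1 : E) + ((ω.1.mulMap circ (a, x) (b, y)).2 : E) ∧
          s.1.2 ((a : E) + (x : E)) ((b : E) + (y : E))
            = ((ω.1.brMap brk (a, x) (b, y)).1 : E) + ((ω.1.brMap brk (a, x) (b, y)).2 : E)) →
        G (Quot.mk _ ω) = Quot.mk _ s := by
  have hbrk : brk.IsAlt := hGD.2.1.1
  refine ⟨Quot.map (unifiedStr hc) (fun _ _ => (gdStrEquiv_unifiedStr_iff hc hbrk).2),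
    ⟨?_, ?_⟩, fun ω s hs => ?_⟩
  · rintro ⟨ω⟩ ⟨ω'⟩ h
    exact Quot.sound <| (gdStrEquiv_unifiedStr_iff hc hbrk).1 <|
      (gdStrEquiv_equivalence circ brk).eqvGen_iff.1 (Quot.eq.1 h)
  · rintro ⟨s⟩
    exact ⟨Quot.mk _ ⟨s.toExtDatum hc, s.isGD_toExtDatum hc⟩,
      congrArg (Quot.mk _) (unifiedStr_toExtDatum hc s)⟩
  · exact congrArg (Quot.mk _) <| unifiedStr_eq hc (fun p q => (hs p.1 q.1 p.2 q.2).1)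
      (fun p q => (hs p.1 q.1 p.2 q.2).2)

end GDExt
end
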